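/- Let $(Q_k)_{k \ge 0}$ be a nonincreasing sequence of nonnegative random variables with limit $Q_\infty$, and suppose $Q_\infty$ satisfies the distributional fixed-point relation $Q_\infty = \sum_{i=1}^N e^{-2\alpha b_i} Q_{\infty;i}$ a.s., where conditionally on the point process $(b_i)_{i \le N}$ the variables $Q_{\infty;i}$ are i.i.d. copies of $Q_\infty$ independent of the $b_i$, $\alpha > 0$, $\mathbb{E}\sum_{i=1}^N e^{-\alpha b_i} = 1$, $\mathbb{E}[Q_\infty^{1/2}] < \infty$, and $\mathbb{P}(N \ge 2) > 0$. Then $Q_\infty = 0$ almost surely. -/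

import Mathlib

open MeasureTheory ProbabilityTheory Filter
open scoped ENNReal

/-- The discounting weight `e^{-α t}` for a birth time `t ∈ [0,∞]`, where `t = ∞` encodes
the absence of the corresponding point of the point process (so the weight is `0`). -/
noncomputable def birthWeight' (α : ℝ) (t : ℝ≥0∞) : ℝ :=
  if t = ∞ then 0 else Real.exp (-α * t.toReal)

open scoped NNReal

lemma my_sum_rpow_le {ι : Type*} (s : Finset ι) (a : ι → ℝ≥0∞) :
    (∑ i ∈ s, a i) ^ (2⁻¹ : ℝ) ≤ ∑ i ∈ s, a i ^ (2⁻¹ : ℝ) := by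
  classical
  induction s using Finset.cons_induction with
  | empty => simp
  | cons i s hi ih =>
      rw [Finset.sum_cons, Finset.sum_cons]
      calc (a i + ∑ j ∈ s, a j) ^ (2⁻¹ : ℝ)
          ≤ a i ^ (2⁻¹ : ℝ) + (∑ j ∈ s, a j) ^ (2⁻¹ : ℝ) :=
            ENNReal.rpow_add_le_add_rpow _ _ (by norm_num) (by norm_num)
        _ ≤ _ := by exact add_le_add (le_refl _) ih

lemma my_tsum_rpow_le {ι : Type*} (a : ι → ℝ≥0∞) :
    (∑' i, a i) ^ (2⁻¹ : ℝ) ≤ ∑' i, a i ^ (2⁻¹ : ℝ) := by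
  have h : Tendsto (fun s : Finset ι => (∑ i ∈ s, a i) ^ (2⁻¹ : ℝ)) atTop
      (nhds ((∑' i, a i) ^ (2⁻¹ : ℝ))) :=
    (ENNReal.continuous_rpow_const.tendsto _).comp ENNReal.summable.hasSum
  refine le_of_tendsto h (Eventually.of_forall fun s => ?_)
  exact (my_sum_rpow_le s a).trans (ENNReal.sum_le_tsum s)

lemma my_sqrt_strict (u v : ℝ) (hu : 0 < u) (hv : 0 < v) :
    Real.sqrt (u + v) < Real.sqrt u + Real.sqrt v := by
  have h1 : 0 < Real.sqrt u := Real.sqrt_pos.2 hu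
  have h2 : 0 < Real.sqrt v := Real.sqrt_pos.2 hv
  rw [show u + v = Real.sqrt u ^ 2 + Real.sqrt v ^ 2 by
    rw [Real.sq_sqrt hu.le, Real.sq_sqrt hv.le]]
  refine Real.sqrt_lt' (by positivity) |>.2 ?_
  nlinarith [mul_pos h1 h2]

lemma my_rpow_strict (x y : ℝ≥0∞) (hx : x ≠ 0) (hx' : x ≠ ∞) (hy : y ≠ 0) (hy' : y ≠ ∞) :
    (x + y) ^ (2⁻¹ : ℝ) < x ^ (2⁻¹ : ℝ) + y ^ (2⁻¹ : ℝ) := by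
  lift x to ℝ≥0 using hx'
  lift y to ℝ≥0 using hy'
  have hu : (0:ℝ) < x := by
    simpa using pos_iff_ne_zero.2 (fun h => hx (by simp [h]))
  have hv : (0:ℝ) < y := by
    simpa using pos_iff_ne_zero.2 (fun h => hy (by simp [h]))
  have key := my_sqrt_strict x y hu hv
  rw [Real.sqrt_eq_rpow, Real.sqrt_eq_rpow, Real.sqrt_eq_rpow] at key
  rw [← ENNReal.coe_add, ← ENNReal.coe_rpow_of_nonneg _ (by norm_num),
    ← ENNReal.coe_rpow_of_nonneg _ (by norm_num), ← ENNReal.coe_rpow_of_nonneg _ (by norm_num),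
    ← ENNReal.coe_add, ENNReal.coe_lt_coe]
  rw [← NNReal.coe_lt_coe]
  push_cast
  simpa [one_div] using key

lemma bw_nonneg (α : ℝ) (t : ℝ≥0∞) : 0 ≤ birthWeight' α t := by
  unfold birthWeight'; split
  · exact le_refl 0
  · exact (Real.exp_pos _).le

lemma bw_pos {α : ℝ} {t : ℝ≥0∞} (ht : t ≠ ∞) : 0 < birthWeight' α t := by
  simp [birthWeight', ht, Real.exp_pos]

lemma bw_meas (α : ℝ) : Measurable (birthWeight' α) := by
  unfold birthWeight'
  exact Measurable.ite (measurableSet_singleton ∞) measurable_const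
    (Real.measurable_exp.comp (ENNReal.measurable_toReal.const_mul (-α)))

lemma bw_sqrt (α : ℝ) (t : ℝ≥0∞) {q : ℝ} (hq : 0 ≤ q) :
    Real.sqrt (birthWeight' (2 * α) t * q) = birthWeight' α t * Real.sqrt q := by
  unfold birthWeight'
  split
  · simp
  · rw [show (-(2 * α) * t.toReal) = (-α * t.toReal) + (-α * t.toReal) by ring, Real.exp_add,
      Real.sqrt_mul (by positivity), Real.sqrt_mul_self (Real.exp_pos _).le]

lemma pt_sqrt_eq (c : ℝ) (hc : 0 ≤ c) :
    ENNReal.ofReal (Real.sqrt c) = ENNReal.ofReal c ^ (2⁻¹ : ℝ) := by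
  rw [ENNReal.ofReal_rpow_of_nonneg hc (by norm_num), Real.sqrt_eq_rpow, one_div]

lemma pt_le (c : ℕ → ℝ) (hc : ∀ i, 0 ≤ c i) :
    ENNReal.ofReal (Real.sqrt (∑' i, c i)) ≤ ∑' i, ENNReal.ofReal (Real.sqrt (c i)) := by
  have key : ∀ i, ENNReal.ofReal (Real.sqrt (c i)) = ENNReal.ofReal (c i) ^ (2⁻¹ : ℝ) :=
    fun i => pt_sqrt_eq _ (hc i)
  by_cases hs : Summable c
  · calc ENNReal.ofReal (Real.sqrt (∑' i, c i))
        = ENNReal.ofReal (∑' i, c i) ^ (2⁻¹ : ℝ) := pt_sqrt_eq _ (tsum_nonneg hc)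
      _ = (∑' i, ENNReal.ofReal (c i)) ^ (2⁻¹ : ℝ) := by
          rw [ENNReal.ofReal_tsum_of_nonneg hc hs]
      _ ≤ ∑' i, ENNReal.ofReal (c i) ^ (2⁻¹ : ℝ) := my_tsum_rpow_le _
      _ = _ := by exact (tsum_congr fun i => (key i).symm)
  · rw [tsum_eq_zero_of_not_summable hs]
    simp

lemma pt_lt (c : ℕ → ℝ) (hc : ∀ i, 0 ≤ c i) {i j : ℕ} (hij : i ≠ j)
    (hi : 0 < c i) (hj : 0 < c j) :
    ENNReal.ofReal (Real.sqrt (∑' k, c k)) < ∑' k, ENNReal.ofReal (Real.sqrt (c k)) := by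
  set a : ℕ → ℝ≥0∞ := fun k => ENNReal.ofReal (c k) with ha
  have key : ∀ k, ENNReal.ofReal (Real.sqrt (c k)) = a k ^ (2⁻¹ : ℝ) :=
    fun k => pt_sqrt_eq _ (hc k)
  have hai : a i ≠ 0 := by simp [ha, hi, ENNReal.ofReal_pos.2 hi |>.ne']
  have haj : a j ≠ 0 := by simp [ha, ENNReal.ofReal_pos.2 hj |>.ne']
  by_cases hs : Summable c
  · have hfin : ∑' k, a k ≠ ∞ := by
      rw [← ENNReal.ofReal_tsum_of_nonneg hc hs]; exact ENNReal.ofReal_ne_top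
    set T : ℝ≥0∞ := ∑' k, ite (k = i) 0 (a k) with hT
    have hite : ∀ (f : ℕ → ℝ≥0∞), ∑' k, f k = f i + ∑' k, ite (k = i) 0 (f k) := by
      intro f
      rw [ENNReal.tsum_eq_add_tsum_ite i]
      congr 1
      exact tsum_congr fun k => by by_cases h : k = i <;> simp [h]
    have hsplit : ∑' k, a k = a i + T := hite a
    have hTle : T ≤ ∑' k, a k := by
      refine ENNReal.tsum_le_tsum fun k => ?_
      split <;> simp
    have hTfin : T ≠ ∞ := fun h => hfin (top_le_iff.1 (h ▸ hTle))
    have hTpos : T ≠ 0 := by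
      intro h0
      have : ite (j = i) 0 (a j) ≤ T := ENNReal.le_tsum j
      rw [if_neg (fun h => hij h.symm), h0] at this
      exact haj (le_zero_iff.1 this)
    calc ENNReal.ofReal (Real.sqrt (∑' k, c k))
        = (∑' k, a k) ^ (2⁻¹ : ℝ) := by
          rw [pt_sqrt_eq _ (tsum_nonneg hc), ENNReal.ofReal_tsum_of_nonneg hc hs]
      _ = (a i + T) ^ (2⁻¹ : ℝ) := by rw [hsplit]
      _ < a i ^ (2⁻¹ : ℝ) + T ^ (2⁻¹ : ℝ) :=
          my_rpow_strict _ _ hai ENNReal.ofReal_ne_top hTpos hTfin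
      _ ≤ a i ^ (2⁻¹ : ℝ) + ∑' k, (ite (k = i) 0 (a k)) ^ (2⁻¹ : ℝ) :=
          add_le_add (le_refl _) (my_tsum_rpow_le _)
      _ = a i ^ (2⁻¹ : ℝ) + ∑' k, ite (k = i) 0 (a k ^ (2⁻¹ : ℝ)) := by
          refine congrArg _ (tsum_congr fun k => ?_)
          split <;> simp
      _ = ∑' k, a k ^ (2⁻¹ : ℝ) := (hite (fun k => a k ^ (2⁻¹ : ℝ))).symm
      _ = _ := (tsum_congr fun k => (key k).symm)
  · rw [tsum_eq_zero_of_not_summable hs]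
    simp only [Real.sqrt_zero, ENNReal.ofReal_zero]
    refine lt_of_lt_of_le ?_ (ENNReal.le_tsum i)
    exact ENNReal.ofReal_pos.2 (Real.sqrt_pos.2 hi)


/-- Let `(Q k)` be a nonincreasing sequence of nonnegative random variables
with pointwise limit `Qinf`, satisfying the almost-sure fixed-point relation
`Qinf = ∑ᵢ e^{-2α bᵢ} Q'ᵢ`, where the `Q'ᵢ` are mutually independent copies of `Qinf`,
independent of the point process `(bᵢ)` (with `bᵢ = ∞` encoding an absent point).
Assume `α > 0`, the Malthusian normalization `𝔼[∑ᵢ e^{-α bᵢ}] = 1`, `𝔼[Qinf^{1/2}] < ∞`,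
and that with positive probability the process has at least two points.
Then `Qinf = 0` almost surely. -/
theorem fixed_point_Qinf_zero
    {Ω : Type*} [MeasurableSpace Ω] (μ : Measure Ω) [IsProbabilityMeasure μ]
    (α : ℝ) (hα : 0 < α)
    (b : ℕ → Ω → ℝ≥0∞) (hb : ∀ i, Measurable (b i))
    (hmal : ∫⁻ ω, ∑' i, ENNReal.ofReal (birthWeight' α (b i ω)) ∂μ = 1)
    (Q : ℕ → Ω → ℝ) (hQnn : ∀ k ω, 0 ≤ Q k ω)
    (hQmono : ∀ ω, Antitone (fun k => Q k ω))
    (Qinf : Ω → ℝ) (hQinfmeas : Measurable Qinf)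
    (hlim : ∀ ω, Tendsto (fun k => Q k ω) atTop (nhds (Qinf ω)))
    (Q' : ℕ → Ω → ℝ) (hQ'meas : ∀ i, Measurable (Q' i))
    (hcopies : ∀ i, μ.map (Q' i) = μ.map Qinf)
    (hQ'indep : iIndepFun Q' μ)
    (hQ'b : IndepFun (fun ω => (fun i => Q' i ω)) (fun ω => (fun i => b i ω)) μ)
    (hfix : ∀ᵐ ω ∂μ, Qinf ω = ∑' i, birthWeight' (2 * α) (b i ω) * Q' i ω)
    (hsqrt : Integrable (fun ω => Real.sqrt (Qinf ω)) μ)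
    (hN2 : 0 < μ {ω | ∃ i j : ℕ, i ≠ j ∧ b i ω ≠ ∞ ∧ b j ω ≠ ∞}) :
    ∀ᵐ ω ∂μ, Qinf ω = 0 := by
  classical
  have hQinf_nn : ∀ ω, 0 ≤ Qinf ω := fun ω =>
    ge_of_tendsto (hlim ω) (Eventually.of_forall fun k => hQnn k ω)
  set W : ℕ → Ω → ℝ≥0∞ := fun i ω => ENNReal.ofReal (birthWeight' α (b i ω)) with hW
  set S : ℕ → Ω → ℝ≥0∞ := fun i ω => ENNReal.ofReal (Real.sqrt (Q' i ω)) with hS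
  set g : ℕ → Ω → ℝ≥0∞ := fun i ω => W i ω * S i ω with hg
  set G : Ω → ℝ≥0∞ := fun ω => ∑' i, g i ω with hG
  set h : Ω → ℝ≥0∞ := fun ω => ENNReal.ofReal (Real.sqrt (Qinf ω)) with hh
  have hWmeas : ∀ i, Measurable (W i) := fun i =>
    ENNReal.measurable_ofReal.comp ((bw_meas α).comp (hb i))
  have hSmeas : ∀ i, Measurable (S i) := fun i =>
    ENNReal.measurable_ofReal.comp (Real.continuous_sqrt.measurable.comp (hQ'meas i))
  have hgmeas : ∀ i, Measurable (g i) := fun i => (hWmeas i).mul (hSmeas i)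
  have hGmeas : Measurable G := Measurable.ennreal_tsum hgmeas
  -- finiteness of ∫ h
  have hIfin : ∫⁻ ω, h ω ∂μ ≠ ∞ := by
    rw [hh, ← ofReal_integral_eq_lintegral_ofReal hsqrt
      (ae_of_all _ fun ω => Real.sqrt_nonneg _)]
    exact ENNReal.ofReal_ne_top
  -- law transfer for sqrt integrals
  have hfmeas : Measurable (fun x : ℝ => ENNReal.ofReal (Real.sqrt x)) :=
    ENNReal.measurable_ofReal.comp Real.continuous_sqrt.measurable
  have hSint : ∀ i, ∫⁻ ω, S i ω ∂μ = ∫⁻ ω, h ω ∂μ := by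
    intro i
    calc ∫⁻ ω, S i ω ∂μ
        = ∫⁻ x, ENNReal.ofReal (Real.sqrt x) ∂(μ.map (Q' i)) :=
          (lintegral_map hfmeas (hQ'meas i)).symm
      _ = ∫⁻ x, ENNReal.ofReal (Real.sqrt x) ∂(μ.map Qinf) := by rw [hcopies i]
      _ = ∫⁻ ω, h ω ∂μ := lintegral_map hfmeas hQinfmeas
  -- Malthusian sum of weights
  have hWsum : ∑' i, ∫⁻ ω, W i ω ∂μ = 1 := by
    rw [← lintegral_tsum fun i => (hWmeas i).aemeasurable]
    exact hmal
  -- independence of W i and S i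
  have hindep : ∀ i, IndepFun (W i) (S i) μ := by
    intro i
    have hφ : Measurable (fun u : ℕ → ℝ≥0∞ => ENNReal.ofReal (birthWeight' α (u i))) :=
      ENNReal.measurable_ofReal.comp ((bw_meas α).comp (measurable_pi_apply i))
    have hψ : Measurable (fun v : ℕ → ℝ => ENNReal.ofReal (Real.sqrt (v i))) :=
      ENNReal.measurable_ofReal.comp (Real.continuous_sqrt.measurable.comp (measurable_pi_apply i))
    exact hQ'b.symm.comp hφ hψ
  have hgint : ∀ i, ∫⁻ ω, g i ω ∂μ = (∫⁻ ω, W i ω ∂μ) * ∫⁻ ω, h ω ∂μ := by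
    intro i
    rw [← hSint i]
    exact lintegral_mul_eq_lintegral_mul_lintegral_of_indepFun (hWmeas i) (hSmeas i) (hindep i)
  have hGint : ∫⁻ ω, G ω ∂μ = ∫⁻ ω, h ω ∂μ := by
    calc ∫⁻ ω, G ω ∂μ = ∑' i, ∫⁻ ω, g i ω ∂μ :=
          lintegral_tsum fun i => (hgmeas i).aemeasurable
      _ = ∑' i, (∫⁻ ω, W i ω ∂μ) * ∫⁻ ω, h ω ∂μ := tsum_congr hgint
      _ = (∑' i, ∫⁻ ω, W i ω ∂μ) * ∫⁻ ω, h ω ∂μ := ENNReal.tsum_mul_right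
      _ = ∫⁻ ω, h ω ∂μ := by rw [hWsum, one_mul]
  -- a.s. nonnegativity of the copies
  have hQ'nn : ∀ᵐ ω ∂μ, ∀ i, 0 ≤ Q' i ω := by
    rw [ae_all_iff]
    intro i
    have hset : MeasurableSet {x : ℝ | x < 0} :=
      measurableSet_lt measurable_id measurable_const
    have h0 : μ {ω | Q' i ω < 0} = 0 := by
      have h1 : μ {ω | Q' i ω < 0} = μ.map (Q' i) {x | x < 0} :=
        (Measure.map_apply (hQ'meas i) hset).symm
      rw [h1, hcopies i, Measure.map_apply hQinfmeas hset]
      have : Qinf ⁻¹' {x | x < 0} = ∅ := by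
        ext ω; simp [not_lt.2 (hQinf_nn ω)]
      simp [this]
    rw [ae_iff]
    simpa [not_le] using h0
  -- key identity: g i ω = ofReal (sqrt (c i ω))
  have hg_eq : ∀ ω, (∀ i, 0 ≤ Q' i ω) → ∀ i,
      g i ω = ENNReal.ofReal (Real.sqrt (birthWeight' (2 * α) (b i ω) * Q' i ω)) := by
    intro ω hnn i
    rw [hg, hW, hS]
    simp only
    rw [bw_sqrt α _ (hnn i), ENNReal.ofReal_mul (bw_nonneg _ _)]
  -- a.e. inequality h ≤ G
  have hle : h ≤ᵐ[μ] G := by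
    filter_upwards [hfix, hQ'nn] with ω hfx hnn
    have hcnn : ∀ i, 0 ≤ birthWeight' (2 * α) (b i ω) * Q' i ω :=
      fun i => mul_nonneg (bw_nonneg _ _) (hnn i)
    calc h ω = ENNReal.ofReal (Real.sqrt (∑' i, birthWeight' (2 * α) (b i ω) * Q' i ω)) := by
          rw [hh]; simp only; rw [hfx]
      _ ≤ ∑' i, ENNReal.ofReal (Real.sqrt (birthWeight' (2 * α) (b i ω) * Q' i ω)) :=
          pt_le _ hcnn
      _ = G ω := by rw [hG]; exact tsum_congr fun i => (hg_eq ω hnn i).symm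
  -- a.e. equality
  have hmain : h =ᵐ[μ] G :=
    ae_eq_of_ae_le_of_lintegral_le hle hIfin hGmeas.aemeasurable (le_of_eq hGint)
  -- now the contradiction argument
  by_contra hcon
  have hpos : μ {ω | 0 < Qinf ω} ≠ 0 := by
    intro h0
    apply hcon
    rw [ae_iff]
    convert h0 using 2
    ext ω
    simp only [Set.mem_setOf_eq]
    constructor
    · exact fun hne => lt_of_le_of_ne (hQinf_nn ω) (Ne.symm hne)
    · exact fun hlt => hlt.ne'
  -- find a pair i ≠ j with positive probability of both points present
  have hpair : ∃ i j : ℕ, i ≠ j ∧ μ {ω | b i ω ≠ ∞ ∧ b j ω ≠ ∞} ≠ 0 := by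
    by_contra hno
    push_neg at hno
    have hsub : {ω | ∃ i j : ℕ, i ≠ j ∧ b i ω ≠ ∞ ∧ b j ω ≠ ∞} ⊆
        ⋃ (i : ℕ) (j : ℕ) (_ : i ≠ j), {ω | b i ω ≠ ∞ ∧ b j ω ≠ ∞} := by
      rintro ω ⟨i, j, hij, h1, h2⟩
      exact Set.mem_iUnion.2 ⟨i, Set.mem_iUnion.2 ⟨j, Set.mem_iUnion.2 ⟨hij, h1, h2⟩⟩⟩
    have hz : μ (⋃ (i : ℕ) (j : ℕ) (_ : i ≠ j), {ω | b i ω ≠ ∞ ∧ b j ω ≠ ∞}) = 0 :=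
      measure_iUnion_null fun i => measure_iUnion_null fun j =>
        measure_iUnion_null fun hij => hno i j hij
    exact hN2.ne' (measure_mono_null hsub hz)
  obtain ⟨i, j, hij, hEpos⟩ := hpair
  -- the positive probability event
  set A : Set (ℕ → ℝ) := {v | 0 < v i ∧ 0 < v j} with hA
  set B : Set (ℕ → ℝ≥0∞) := {u | u i ≠ ∞ ∧ u j ≠ ∞} with hB
  have hAmeas : MeasurableSet A :=
    (measurableSet_lt measurable_const (measurable_pi_apply i)).inter
      (measurableSet_lt measurable_const (measurable_pi_apply j))
  have hBmeas : MeasurableSet B := by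
    have h1 : B = ((fun u : ℕ → ℝ≥0∞ => u i) ⁻¹' {∞})ᶜ ∩ ((fun u : ℕ → ℝ≥0∞ => u j) ⁻¹' {∞})ᶜ := by
      ext u; simp [hB]
    rw [h1]
    exact (((measurable_pi_apply i) (measurableSet_singleton ∞)).compl).inter
      (((measurable_pi_apply j) (measurableSet_singleton ∞)).compl)
  set F : Set Ω := ((fun ω => (fun k => Q' k ω)) ⁻¹' A) ∩ ((fun ω => (fun k => b k ω)) ⁻¹' B)
    with hF
  have hQA : μ ((fun ω => (fun k => Q' k ω)) ⁻¹' A) =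
      μ {ω | 0 < Q' i ω} * μ {ω | 0 < Q' j ω} := by
    have := (hQ'indep.indepFun hij).measure_inter_preimage_eq_mul (Set.Ioi 0) (Set.Ioi 0)
      measurableSet_Ioi measurableSet_Ioi
    convert this using 2
    all_goals rfl
  have hQ'pos : ∀ k : ℕ, μ {ω | 0 < Q' k ω} = μ {ω | 0 < Qinf ω} := by
    intro k
    have h1 : μ {ω | 0 < Q' k ω} = μ.map (Q' k) (Set.Ioi 0) :=
      (Measure.map_apply (hQ'meas k) measurableSet_Ioi).symm
    rw [h1, hcopies k, Measure.map_apply hQinfmeas measurableSet_Ioi]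
    rfl
  have hFpos : μ F ≠ 0 := by
    rw [hF, hQ'b.measure_inter_preimage_eq_mul A B hAmeas hBmeas, hQA, hQ'pos i, hQ'pos j]
    have hE : μ ((fun ω => (fun k => b k ω)) ⁻¹' B) ≠ 0 := hEpos
    simp only [ne_eq, mul_eq_zero, not_or]
    exact ⟨⟨hpos, hpos⟩, hE⟩
  -- on F (a.e.) we get a strict inequality, contradicting hmain
  have hFnull : ∀ᵐ ω ∂μ, ω ∉ F := by
    filter_upwards [hfix, hQ'nn, hmain] with ω hfx hnn heq
    rintro ⟨⟨hQi, hQj⟩, hbi, hbj⟩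
    have hcnn : ∀ k, 0 ≤ birthWeight' (2 * α) (b k ω) * Q' k ω :=
      fun k => mul_nonneg (bw_nonneg _ _) (hnn k)
    have hci : 0 < birthWeight' (2 * α) (b i ω) * Q' i ω :=
      mul_pos (bw_pos hbi) hQi
    have hcj : 0 < birthWeight' (2 * α) (b j ω) * Q' j ω :=
      mul_pos (bw_pos hbj) hQj
    have hstrict : h ω < G ω := by
      calc h ω = ENNReal.ofReal (Real.sqrt (∑' k, birthWeight' (2 * α) (b k ω) * Q' k ω)) := by
            rw [hh]; simp only; rw [hfx]
        _ < ∑' k, ENNReal.ofReal (Real.sqrt (birthWeight' (2 * α) (b k ω) * Q' k ω)) :=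
            pt_lt _ hcnn hij hci hcj
        _ = G ω := by rw [hG]; exact tsum_congr fun k => (hg_eq ω hnn k).symm
    exact hstrict.ne heq
  have : μ F = 0 := by
    have := hFnull
    rw [ae_iff] at this
    simpa [not_not] using this
  exact hFpos this
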